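/- Characterization of the image of T: a pair (π′, σ′) ∈ B(n) ∪ C(n) lies in T(A(n)) if and only if the backward alternating chain starting from man n (following affair then marriage edges: starting with w such that σ′ pairs n with w, then the husband of w under π′, etc.) terminates at woman 1′ (when (π′,σ′) ∈ C(n)) or at woman n′ (when (π′,σ′) ∈ B(n)) rather than at man 1. -/

import Mathlib

/- We work with `n + 2` people of each sex (so the number of people is at least 2),
men and women both indexed by `Fin (n+2)`; man `0` is "Mr. 1" and man `Fin.last (n+1)`
is "Mr. n", and similarly for women.

A pair `(π, σ)` of total permutations of `Fin (n+2)` encodes an element of one of the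
sets `A(n)`, `B(n)`, `C(n)` of pairs (marriage matching, affair matching) of
Zeilberger's proof, via dummy values at the unused points:
* `A(n)`: `π` is the marriage matching of all men to all women, and the affair
  matching `{2,…,n-1} → {2',…,(n-1)'}` is encoded by a permutation `σ` fixing the
  endpoints `0` and `last`.
* `B(n)`: the marriage matching `{1,…,n-1} → {1',…,(n-1)'}` is encoded by `π` with the
  dummy value `π last = last`, and the affair matching `{2,…,n} → {2',…,n'}` by `σ`
  with dummy value `σ 0 = 0`.
* `C(n)`: the marriage matching `{1,…,n-1} → {2',…,n'}` is encoded by `π` with dummy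
  value `π last = 0`, and the affair matching `{2,…,n} → {1',…,(n-1)'}` by `σ` with
  dummy value `σ 0 = last`. -/

/-- A pair (marriages, affairs) of permutations. -/
abbrev PairPerm (n : ℕ) := Equiv.Perm (Fin (n + 2)) × Equiv.Perm (Fin (n + 2))

/-- The last index (Mr./Ms. `n`). -/
def lastF (n : ℕ) : Fin (n + 2) := Fin.last (n + 1)

/-- The middle indices `{2,…,n-1}` (people having affairs in `A(n)`). -/
def middleF (n : ℕ) : Finset (Fin (n + 2)) := (Finset.univ.erase 0).erase (lastF n)

/-- Membership in `A(n)`: the affair permutation fixes the two endpoints. -/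
def InA {n : ℕ} (p : PairPerm n) : Prop := p.2 0 = 0 ∧ p.2 (lastF n) = lastF n

/-- Membership in `B(n)`: dummy marriage `n ↦ n'`, dummy affair `1 ↦ 1'`. -/
def InB {n : ℕ} (p : PairPerm n) : Prop := p.1 (lastF n) = lastF n ∧ p.2 0 = 0

/-- Membership in `C(n)`: dummy marriage `n ↦ 1'`, dummy affair `1 ↦ n'`. -/
def InC {n : ℕ} (p : PairPerm n) : Prop := p.1 (lastF n) = 0 ∧ p.2 0 = lastF n

/-- The alternating chain of men: `m 0 = n`, and `m (k+1)` is the lover of the wife of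
`m k` (wife: apply `π`; lover: apply `σ⁻¹`). -/
def chainM {n : ℕ} (p : PairPerm n) : ℕ → Fin (n + 2)
  | 0 => lastF n
  | k + 1 => p.2.symm (p.1 (chainM p k))

/-- The alternating chain of women: `w k` is the wife of `m k`. -/
def chainW {n : ℕ} (p : PairPerm n) (k : ℕ) : Fin (n + 2) := p.1 (chainM p k)

/-- `TStep p q` says that `q` is obtained from `p` by Zeilberger's map `T`: along the
alternating chain `m 0 = n, w 0, m 1, w 1, …` of `p`, which terminates at the first
woman `w (r-1) ∈ {1', n'}`, marriages `(m k, w k)` become affairs and affairs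
`(m (k+1), w k)` become marriages; everything off the chain is unchanged, and the
dummy values are set according to whether the chain ended at `1'` or at `n'`. -/
def TStep {n : ℕ} (p q : PairPerm n) : Prop :=
  ∃ r : ℕ, 1 ≤ r ∧
    (∀ k, k + 1 < r → chainW p k ≠ 0 ∧ chainW p k ≠ lastF n) ∧
    (chainW p (r - 1) = 0 ∨ chainW p (r - 1) = lastF n) ∧
    (∀ i, (∀ k, k < r → i ≠ chainM p k) → q.1 i = p.1 i) ∧
    (∀ i, i ≠ 0 → (∀ k, k < r → i ≠ chainM p k) → q.2 i = p.2 i) ∧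
    (∀ k, k + 1 < r → q.1 (chainM p (k + 1)) = chainW p k) ∧
    q.1 (lastF n) = chainW p (r - 1) ∧
    (∀ k, k < r → q.2 (chainM p k) = chainW p k) ∧
    q.2 0 = (if chainW p (r - 1) = 0 then lastF n else 0)

/-- The backward alternating chain in `q ∈ B(n) ∪ C(n)`, starting from man `n`:
first follow the affair edge (apply `σ'`), then the marriage edge backwards
(apply `π'⁻¹`), and repeat. -/
def bchain {n : ℕ} (q : PairPerm n) (k : ℕ) : Fin (n + 2) :=
  (fun x => q.1.symm (q.2 x))^[k] (lastF n)

/-!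
Write `f = π'⁻¹ σ'` (`backStep`). The backward chain is the `f`-orbit of man `n`, and in the
total encoding it ends at the unmarried woman exactly when it closes up before meeting man `1`,
i.e. when man `1` is not on the cycle `γ` of `f` through man `n`.

If `q = T p` with `p ∈ A(n)`, the backward chain of `q` retraces the forward chain of `p`, and it
cannot meet man `1` because the lover of man `1` is fixed in `A(n)`. Conversely, if man `1` is
not on `γ`, then `(π' γ, σ' (s γ)⁻¹)`, where `s` exchanges man `1` and `σ' 1`, is a preimage:
it undoes `T` along the chain and, through `s`, restores the dummy values of `A(n)`.
-/

open Equiv Equiv.Perm Function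

theorem lastF_ne_zero (n : ℕ) : lastF n ≠ 0 := by
  simp [lastF, Fin.ext_iff]

theorem Equiv.Perm.SameCycle.exists_iterate_lt_minimalPeriod {α : Type*} [Finite α]
    {f : Perm α} {x y : α} (h : f.SameCycle x y) :
    ∃ j < minimalPeriod f x, f^[j] x = y := by
  obtain ⟨i, rfl⟩ := h.exists_nat_pow_eq
  have hpos : 0 < minimalPeriod f x :=
    minimalPeriod_pos_of_mem_periodicPts (f.injective.mem_periodicPts x)
  exact ⟨i % minimalPeriod f x, Nat.mod_lt _ hpos,
    (isPeriodicPt_minimalPeriod f x).iterate_mod_apply i⟩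

section BackwardChain

variable {n : ℕ}

def backStep (q : PairPerm n) : Perm (Fin (n + 2)) := q.2.trans q.1.symm

theorem bchain_eq_iterate (q : PairPerm n) (k : ℕ) :
    bchain q k = (backStep q)^[k] (lastF n) := rfl

theorem bchain_succ (q : PairPerm n) (k : ℕ) :
    bchain q (k + 1) = q.1.symm (q.2 (bchain q k)) :=
  iterate_succ_apply' _ k _

theorem fst_apply_bchain_succ (q : PairPerm n) (k : ℕ) :
    q.1 (bchain q (k + 1)) = q.2 (bchain q k) := by
  rw [bchain_succ, Equiv.apply_symm_apply]

theorem exists_bchain_eq_lastF_iff (q : PairPerm n) :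
    (∃ k, 1 ≤ k ∧ bchain q k = lastF n ∧ ∀ j, 1 ≤ j → j < k → bchain q j ≠ 0) ↔
      ¬(backStep q).SameCycle (lastF n) 0 := by
  constructor
  · rintro ⟨k, hk, hbk, hne⟩ hcyc
    obtain ⟨j, hj, hbj⟩ := hcyc.exists_iterate_lt_minimalPeriod
    have hjk : minimalPeriod (backStep q) (lastF n) ≤ k :=
      IsPeriodicPt.minimalPeriod_le hk hbk
    have hj0 : j ≠ 0 := by
      rintro rfl
      exact lastF_ne_zero n hbj
    exact hne j (Nat.one_le_iff_ne_zero.2 hj0) (hj.trans_le hjk) hbj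
  · intro h0
    refine ⟨minimalPeriod (backStep q) (lastF n),
      minimalPeriod_pos_of_mem_periodicPts ((backStep q).injective.mem_periodicPts _),
      iterate_minimalPeriod, fun j _ _ hj => h0 ?_⟩
    rw [← hj, bchain_eq_iterate, iterate_eq_pow]
    exact SameCycle.refl _ _ |>.pow_right

end BackwardChain

section Forward

variable {n : ℕ} {p q : PairPerm n} {r : ℕ}

theorem bchain_eq_chainM (hσ : ∀ k, k < r → q.2 (chainM p k) = chainW p k)
    (hπ : ∀ k, k + 1 < r → q.1 (chainM p (k + 1)) = chainW p k) :
    ∀ j, j < r → bchain q j = chainM p j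
  | 0, _ => rfl
  | j + 1, hj => by
    rw [bchain_succ, bchain_eq_chainM hσ hπ j (by omega), hσ j (by omega), Equiv.symm_apply_eq,
      hπ j hj]

theorem exists_bchain_eq_lastF_of_tStep (hA : InA p) (hT : TStep p q) :
    ∃ k, 1 ≤ k ∧ bchain q k = lastF n ∧ ∀ j, 1 ≤ j → j < k → bchain q j ≠ 0 := by
  obtain ⟨r, hr, hmid, -, -, -, hπ, hπlast, hσ, -⟩ := hT
  have hb := bchain_eq_chainM hσ hπ
  obtain ⟨m, rfl⟩ : ∃ m, r = m + 1 := ⟨r - 1, by omega⟩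
  refine ⟨m + 1, hr, ?_, ?_⟩
  · rw [bchain_succ, hb m m.lt_succ_self, hσ m m.lt_succ_self, Equiv.symm_apply_eq]
    exact hπlast.symm
  · rintro (_ | j) hj1 hj h0
    · omega
    -- man `1` on the chain would be the lover of `w j`, but `σ` fixes man `1`
    have hw : chainW p j = 0 := by
      rw [hb _ hj, chainM, Equiv.symm_apply_eq, hA.1] at h0
      exact h0
    exact (hmid j hj).1 hw

end Forward

section Inverse

variable {n : ℕ} (q : PairPerm n)

def chainCycle : Perm (Fin (n + 2)) := (backStep q).cycleOf (lastF n)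

noncomputable def chainLength : ℕ := minimalPeriod (backStep q) (lastF n)

/-- Every man of the backward chain marries his lover, and man `m (j+1)` becomes the lover of
the woman whom `m j` loved. -/
def invT : PairPerm n :=
  (q.1 * chainCycle q, q.2 * (swap 0 (q.2 0) * chainCycle q)⁻¹)

theorem chainLength_pos : 0 < chainLength q :=
  minimalPeriod_pos_of_mem_periodicPts ((backStep q).injective.mem_periodicPts _)

theorem bchain_chainLength : bchain q (chainLength q) = lastF n :=
  iterate_minimalPeriod

theorem eq_of_bchain_eq {i j : ℕ} (hi : i < chainLength q) (hj : j < chainLength q)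
    (h : bchain q i = bchain q j) : i = j :=
  iterate_injOn_Iio_minimalPeriod hi hj h

theorem chainCycle_apply_bchain (j : ℕ) : chainCycle q (bchain q j) = bchain q (j + 1) :=
  cycleOf_apply_apply_pow_self _ _ j

theorem chainCycle_apply_of_forall_ne {i : Fin (n + 2)}
    (hi : ∀ j, j < chainLength q → i ≠ bchain q j) : chainCycle q i = i :=
  cycleOf_apply_of_not_sameCycle fun h =>
    let ⟨j, hj, hji⟩ := h.exists_iterate_lt_minimalPeriod
    hi j hj hji.symm

theorem snd_apply_bchain_chainLength_pred :
    q.2 (bchain q (chainLength q - 1)) = q.1 (lastF n) := by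
  rw [← fst_apply_bchain_succ, Nat.sub_add_cancel (chainLength_pos q), bchain_chainLength]

theorem invT_fst_apply_bchain (j : ℕ) : (invT q).1 (bchain q j) = q.2 (bchain q j) := by
  rw [invT, Perm.mul_apply, chainCycle_apply_bchain, fst_apply_bchain_succ]

theorem invT_snd_apply_swap_lastF :
    (invT q).2 (swap 0 (q.2 0) (lastF n)) = q.1 (lastF n) := by
  have hτ : (swap 0 (q.2 0) * chainCycle q) (bchain q (chainLength q - 1)) =
      swap 0 (q.2 0) (lastF n) := by
    rw [Perm.mul_apply, chainCycle_apply_bchain, Nat.sub_add_cancel (chainLength_pos q),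
      bchain_chainLength]
  rw [invT, Perm.mul_apply, Perm.inv_eq_iff_eq.2 hτ.symm, snd_apply_bchain_chainLength_pred]

theorem invT_fst_apply_of_forall_ne {i : Fin (n + 2)}
    (hi : ∀ j, j < chainLength q → i ≠ bchain q j) : (invT q).1 i = q.1 i := by
  rw [invT, Perm.mul_apply, chainCycle_apply_of_forall_ne q hi]

theorem invT_snd_apply_of_forall_ne (hq2 : q.2 0 = 0 ∨ q.2 0 = lastF n) {i : Fin (n + 2)}
    (hi0 : i ≠ 0) (hi : ∀ j, j < chainLength q → i ≠ bchain q j) :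
    (invT q).2 i = q.2 i := by
  have hiq : i ≠ q.2 0 := by
    rcases hq2 with h | h
    · rwa [h]
    · rw [h]; exact hi 0 (chainLength_pos q)
  have hτ : (swap 0 (q.2 0) * chainCycle q) i = i := by
    rw [Perm.mul_apply, chainCycle_apply_of_forall_ne q hi, swap_apply_of_ne_of_ne hi0 hiq]
  rw [invT, Perm.mul_apply, Perm.inv_eq_iff_eq.2 hτ.symm]

variable {q}

theorem bchain_ne_zero (h0 : ¬(backStep q).SameCycle (lastF n) 0) (j : ℕ) : bchain q j ≠ 0 :=
  fun hj => h0 ⟨j, hj⟩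

theorem invT_snd_apply_snd_zero (h0 : ¬(backStep q).SameCycle (lastF n) 0) :
    (invT q).2 (q.2 0) = q.2 0 := by
  have hτ : (swap 0 (q.2 0) * chainCycle q) 0 = q.2 0 := by
    rw [Perm.mul_apply, chainCycle, cycleOf_apply_of_not_sameCycle h0, swap_apply_left]
  rw [invT, Perm.mul_apply, Perm.inv_eq_iff_eq.2 hτ.symm]

theorem snd_apply_bchain_ne (h0 : ¬(backStep q).SameCycle (lastF n) 0) {j : ℕ}
    (hj : j + 1 < chainLength q) :
    q.2 (bchain q j) ≠ q.2 0 ∧ q.2 (bchain q j) ≠ q.1 (lastF n) := by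
  refine ⟨fun h => bchain_ne_zero h0 j (q.2.injective h), fun h => ?_⟩
  rw [← fst_apply_bchain_succ] at h
  exact absurd (eq_of_bchain_eq q hj (chainLength_pos q) (q.1.injective h)) j.succ_ne_zero

theorem swap_mul_chainCycle_apply_bchain (h0 : ¬(backStep q).SameCycle (lastF n) 0)
    (hq2 : q.2 0 = 0 ∨ q.2 0 = lastF n) {j : ℕ} (hj : j + 1 < chainLength q) :
    (swap 0 (q.2 0) * chainCycle q) (bchain q j) = bchain q (j + 1) := by
  have hne : bchain q (j + 1) ≠ q.2 0 := by
    rcases hq2 with h | h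
    · rw [h]; exact bchain_ne_zero h0 _
    · rw [h]
      exact fun he => j.succ_ne_zero (eq_of_bchain_eq q hj (chainLength_pos q) he)
  rw [Perm.mul_apply, chainCycle_apply_bchain, swap_apply_of_ne_of_ne (bchain_ne_zero h0 _) hne]

theorem chainM_invT (h0 : ¬(backStep q).SameCycle (lastF n) 0)
    (hq2 : q.2 0 = 0 ∨ q.2 0 = lastF n) :
    ∀ j, j < chainLength q → chainM (invT q) j = bchain q j
  | 0, _ => rfl
  | j + 1, hj => by
    rw [chainM, chainM_invT h0 hq2 j (by omega), invT_fst_apply_bchain, Equiv.symm_apply_eq,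
      invT, Perm.mul_apply, Perm.inv_eq_iff_eq.2 (swap_mul_chainCycle_apply_bchain h0 hq2 hj).symm]

theorem chainW_invT (h0 : ¬(backStep q).SameCycle (lastF n) 0)
    (hq2 : q.2 0 = 0 ∨ q.2 0 = lastF n) {j : ℕ} (hj : j < chainLength q) :
    chainW (invT q) j = q.2 (bchain q j) := by
  rw [chainW, chainM_invT h0 hq2 j hj, invT_fst_apply_bchain]

theorem inA_invT (hq : InB q ∨ InC q) (h0 : ¬(backStep q).SameCycle (lastF n) 0) :
    InA (invT q) := by
  have hfix := invT_snd_apply_snd_zero h0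
  have hlast := invT_snd_apply_swap_lastF q
  rcases hq with ⟨hπ, hσ⟩ | ⟨hπ, hσ⟩
  · rw [hσ] at hfix hlast
    rw [swap_self, refl_apply, hπ] at hlast
    exact ⟨hfix, hlast⟩
  · rw [hσ] at hfix hlast
    rw [swap_apply_right, hπ] at hlast
    exact ⟨hlast, hfix⟩

theorem tStep_invT (hq : InB q ∨ InC q) (h0 : ¬(backStep q).SameCycle (lastF n) 0) :
    TStep (invT q) q := by
  have hq2 : q.2 0 = 0 ∨ q.2 0 = lastF n := hq.imp And.right And.right
  have hM := chainM_invT h0 hq2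
  have hW : ∀ {j}, j < chainLength q → chainW (invT q) j = q.2 (bchain q j) :=
    chainW_invT h0 hq2
  have hpos := chainLength_pos q
  have hend := hW (j := chainLength q - 1) (by omega)
  rw [snd_apply_bchain_chainLength_pred] at hend
  have hoff : ∀ i, (∀ k, k < chainLength q → i ≠ chainM (invT q) k) →
      ∀ j, j < chainLength q → i ≠ bchain q j :=
    fun i hi j hj => hM j hj ▸ hi j hj
  refine ⟨chainLength q, hpos, fun k hk => ?_, ?_,
    fun i hi => (invT_fst_apply_of_forall_ne q (hoff i hi)).symm,
    fun i hi0 hi => (invT_snd_apply_of_forall_ne q hq2 hi0 (hoff i hi)).symm,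
    fun k hk => ?_, hend.symm, fun k hk => by rw [hM k hk, hW hk], ?_⟩
  · have hne := snd_apply_bchain_ne h0 hk
    rw [hW (by omega)]
    rcases hq with ⟨hπ, hσ⟩ | ⟨hπ, hσ⟩ <;> rw [hπ, hσ] at hne
    exacts [hne, hne.symm]
  · rw [hend]
    exact hq.symm.imp And.left And.left
  · rw [hM (k + 1) hk, hW (by omega), fst_apply_bchain_succ]
  · rw [hend]
    rcases hq with ⟨hπ, hσ⟩ | ⟨hπ, hσ⟩
    · rw [hπ, hσ, if_neg (lastF_ne_zero n)]
    · rw [hπ, hσ, if_pos rfl]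

end Inverse

/-- In the total encoding, ending at the unmarried woman means that the backward chain returns
to man `n` (via the dummy marriage edge) without first passing through man `1 = 0`. -/
theorem T_image_characterization {n : ℕ} (q : PairPerm n) (hq : InB q ∨ InC q) :
    (∃ p, InA p ∧ TStep p q) ↔
      ∃ k, 1 ≤ k ∧ bchain q k = lastF n ∧ ∀ j, 1 ≤ j → j < k → bchain q j ≠ 0 := by
  refine ⟨fun ⟨p, hA, hT⟩ => exists_bchain_eq_lastF_of_tStep hA hT, fun h => ?_⟩
  have h0 := (exists_bchain_eq_lastF_iff q).1 h
  exact ⟨invT q, inA_invT hq h0, tStep_invT hq h0⟩
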